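/- arXiv:2110.09171 — 8 statements merged into one kernel-verified Lean document; each statement's English description precedes it below -/
import Mathlib

section
/- Let V be a type of propositional variables, M ⊆ (V → Bool) a finite set of models, and P ⊆ V a projection set. If L is an LBS of P in M, G is a GIS of P in M, and U is a UBS of P in M, then the projected model counts satisfy |M↾L| ≤ |M↾P| = |M↾G| ≤ |M↾U|, i.e., Set.ncard {σ↾L | σ ∈ M} ≤ Set.ncard {σ↾P | σ ∈ M} = Set.ncard {σ↾G | σ ∈ M} ≤ Set.ncard {σ↾U | σ ∈ M}. -/
/-- The restriction of an assignment `σ : V → Bool` to the subtype of a set `S ⊆ V`. -/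
def restrict {V : Type*} (S : Set V) (σ : V → Bool) : S → Bool := fun x => σ x.val

/-- `S` is an upper bound support (UBS) of `P` in `M`. -/
def IsUBS {V : Type*} (M : Set (V → Bool)) (P S : Set V) : Prop :=
  ∀ σ₁ ∈ M, ∀ σ₂ ∈ M, restrict S σ₁ = restrict S σ₂ → restrict P σ₁ = restrict P σ₂

/-- `S` is a lower bound support (LBS) of `P` in `M`. -/
def IsLBS {V : Type*} (M : Set (V → Bool)) (P S : Set V) : Prop :=
  ∀ σ₁ ∈ M, ∀ σ₂ ∈ M, restrict P σ₁ = restrict P σ₂ → restrict S σ₁ = restrict S σ₂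

/-- `S` is a generalized independent support (GIS) of `P` in `M`. -/
def IsGIS {V : Type*} (M : Set (V → Bool)) (P S : Set V) : Prop :=
  IsUBS M P S ∧ IsLBS M P S

lemma card_le_of_determines {V : Type*} (M : Set (V → Bool)) (hM : M.Finite) (A B : Set V)
    (h : ∀ σ₁ ∈ M, ∀ σ₂ ∈ M, restrict A σ₁ = restrict A σ₂ → restrict B σ₁ = restrict B σ₂) :
    Set.ncard {τ | ∃ σ ∈ M, τ = restrict B σ} ≤ Set.ncard {τ | ∃ σ ∈ M, τ = restrict A σ} := by
  have hA : {τ | ∃ σ ∈ M, τ = restrict A σ} = (restrict A) '' M := by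
    ext τ; simp [eq_comm]
  have hB : {τ | ∃ σ ∈ M, τ = restrict B σ} = (restrict B) '' M := by
    ext τ; simp [eq_comm]
  rw [hA, hB]
  have hAf : ((restrict A) '' M).Finite := hM.image _
  have hch : ∀ τ ∈ (restrict B) '' M, ∃ σ, σ ∈ M ∧ restrict B σ = τ := by
    intro τ hτ; obtain ⟨σ, hσ, hσ'⟩ := hτ; exact ⟨σ, hσ, hσ'⟩
  classical
  choose g hg1 hg2 using hch
  exact Set.ncard_le_ncard_of_injOn
    (fun τ => if hτ : τ ∈ (restrict B) '' M then restrict A (g τ hτ) else restrict A (fun _ => false))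
    (fun τ hτ => by simp only [dif_pos hτ]; exact ⟨g τ hτ, hg1 τ hτ, rfl⟩)
    (fun τ₁ h₁ τ₂ h₂ heq => by
      simp only [dif_pos h₁, dif_pos h₂] at heq
      rw [← hg2 τ₁ h₁, ← hg2 τ₂ h₂]
      exact h _ (hg1 τ₁ h₁) _ (hg1 τ₂ h₂) heq)
    hAf

theorem projected_count_bounds {V : Type*} (M : Set (V → Bool)) (hM : M.Finite)
    (P L G U : Set V)
    (hL : IsLBS M P L) (hG : IsGIS M P G) (hU : IsUBS M P U) :
    Set.ncard {τ | ∃ σ ∈ M, τ = restrict L σ} ≤ Set.ncard {τ | ∃ σ ∈ M, τ = restrict P σ} ∧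
    Set.ncard {τ | ∃ σ ∈ M, τ = restrict P σ} = Set.ncard {τ | ∃ σ ∈ M, τ = restrict G σ} ∧
    Set.ncard {τ | ∃ σ ∈ M, τ = restrict G σ} ≤ Set.ncard {τ | ∃ σ ∈ M, τ = restrict U σ} := by
  refine ⟨card_le_of_determines M hM P L hL, ?_, card_le_of_determines M hM U G fun σ₁ h₁ σ₂ h₂ hq => hG.2 σ₁ h₁ σ₂ h₂ (hU σ₁ h₁ σ₂ h₂ hq)⟩
  exact le_antisymm (card_le_of_determines M hM G P hG.1) (card_le_of_determines M hM P G hG.2)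
end

section
/- Let V be a type of propositional variables, M ⊆ (V → Bool) a set of models, and P ⊆ V a projection set. If U is a UBS of P in M and U is a finite set, then the projection of M on P, namely {σ↾P | σ ∈ M}, is a finite set of cardinality at most 2 ^ (Set.ncard U). -/
theorem UBS_finite_bound {V : Type*} (M : Set (V → Bool)) (P U : Set V)
    (hU : IsUBS M P U) (hUfin : U.Finite) :
    {τ | ∃ σ ∈ M, τ = restrict P σ}.Finite ∧
      Set.ncard {τ | ∃ σ ∈ M, τ = restrict P σ} ≤ 2 ^ Set.ncard U := by
  haveI : Finite U := hUfin
  set T := {τ | ∃ σ ∈ M, τ = restrict P σ} with hT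
  have hchoose : ∀ τ : T, ∃ σ ∈ M, (τ : P → Bool) = restrict P σ := fun τ => τ.2
  choose σ hσM hσeq using hchoose
  have hinj : Function.Injective (fun τ : T => restrict U (σ τ)) := by
    intro τ₁ τ₂ h
    have := hU (σ τ₁) (hσM τ₁) (σ τ₂) (hσM τ₂) h
    exact Subtype.ext ((hσeq τ₁).trans (this.trans (hσeq τ₂).symm))
  haveI : Finite T := Finite.of_injective _ hinj
  refine ⟨Set.toFinite T, ?_⟩
  calc T.ncard = Nat.card T := (Nat.card_coe_set_eq T).symm
    _ ≤ Nat.card (U → Bool) := Nat.card_le_card_of_injective _ hinj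
    _ = 2 ^ Nat.card U := by simp [Nat.card_fun]
    _ = 2 ^ U.ncard := by rw [Nat.card_coe_set_eq]
end

section
/- Let k ≥ 1 and n = 2^k. With the variable set Vₙ = Fin (n−1) ⊕ Fin k, the models Mₙ = {σᵢ | i ∈ Fin n} where σᵢ (Sum.inl j) = decide (j.val + 1 = i.val) and σᵢ (Sum.inr b) = Nat.testBit i.val b.val, and the projection set Pₙ = Set.range Sum.inl: the set Yₙ = Set.range Sum.inr is a GIS of Pₙ in Mₙ with Set.ncard Yₙ = k, and every GIS G of Pₙ in Mₙ satisfies Set.ncard G ≥ k. Hence the smallest GIS of Pₙ in Mₙ has size ⌈log₂ n⌉ = k. -/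
/-- The `i`-th model of the formula `φₙ` of Theorem 1: the x-variable `xⱼ` (for
`j ∈ Fin (n-1)`, representing `x_{j+1}`) is true iff `j + 1 = i`, and the y-variables
encode `i` in binary. -/
def modelσ (k : ℕ) (i : Fin (2 ^ k)) : (Fin (2 ^ k - 1) ⊕ Fin k) → Bool
  | Sum.inl j => decide (j.val + 1 = i.val)
  | Sum.inr b => Nat.testBit i.val b.val

lemma modelσ_P_key (k : ℕ) (i j : Fin (2 ^ k))
    (h : restrict (Set.range (Sum.inl : Fin (2^k-1) → Fin (2^k-1) ⊕ Fin k)) (modelσ k i)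
       = restrict (Set.range Sum.inl) (modelσ k j)) (hi : i.val ≠ 0) : i.val = j.val := by
  have hlt : i.val < 2 ^ k := i.isLt
  have hx : i.val - 1 < 2 ^ k - 1 := by omega
  have := congrFun h ⟨Sum.inl ⟨i.val - 1, hx⟩, ⟨_, rfl⟩⟩
  simp only [restrict, modelσ, decide_eq_decide] at this
  omega

lemma modelσ_P_inj (k : ℕ) :
    Function.Injective fun i : Fin (2 ^ k) =>
      restrict (Set.range (Sum.inl : Fin (2^k-1) → Fin (2^k-1) ⊕ Fin k)) (modelσ k i) := by
  intro i j h
  apply Fin.ext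
  by_cases hi : i.val = 0
  · by_cases hj : j.val = 0
    · omega
    · exact (modelσ_P_key k j i h.symm hj).symm
  · exact modelσ_P_key k i j h hi

lemma modelσ_Y_inj (k : ℕ) :
    Function.Injective fun i : Fin (2 ^ k) =>
      restrict (Set.range (Sum.inr : Fin k → Fin (2^k-1) ⊕ Fin k)) (modelσ k i) := by
  intro i j h
  apply Fin.ext
  apply Nat.eq_of_testBit_eq
  intro b
  by_cases hb : b < k
  · have := congrFun h ⟨Sum.inr ⟨b, hb⟩, ⟨_, rfl⟩⟩
    simpa [restrict, modelσ] using this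
  · have h1 : i.val < 2 ^ b := lt_of_lt_of_le i.isLt (Nat.pow_le_pow_right (by norm_num) (by omega))
    have h2 : j.val < 2 ^ b := lt_of_lt_of_le j.isLt (Nat.pow_le_pow_right (by norm_num) (by omega))
    rw [Nat.testBit_lt_two_pow h1, Nat.testBit_lt_two_pow h2]

theorem GIS_exponentially_smaller (k : ℕ) (hk : 1 ≤ k) :
    IsGIS (Set.range (modelσ k)) (Set.range Sum.inl) (Set.range Sum.inr) ∧
    Set.ncard (Set.range (Sum.inr : Fin k → Fin (2 ^ k - 1) ⊕ Fin k)) = k ∧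
    ∀ G : Set (Fin (2 ^ k - 1) ⊕ Fin k),
      IsGIS (Set.range (modelσ k)) (Set.range Sum.inl) G → k ≤ Set.ncard G := by
  refine ⟨⟨?_, ?_⟩, ?_, ?_⟩
  · rintro _ ⟨i, rfl⟩ _ ⟨j, rfl⟩ h
    have : i = j := modelσ_Y_inj k h
    rw [this]
  · rintro _ ⟨i, rfl⟩ _ ⟨j, rfl⟩ h
    have : i = j := modelσ_P_inj k h
    rw [this]
  · rw [← Nat.card_coe_set_eq, Nat.card_range_of_injective Sum.inr_injective, Nat.card_eq_fintype_card, Fintype.card_fin]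
  · intro G hG
    have hinj : Function.Injective fun i : Fin (2 ^ k) => restrict G (modelσ k i) := by
      intro i j h
      exact modelσ_P_inj k (hG.1 _ ⟨i, rfl⟩ _ ⟨j, rfl⟩ h)
    have hc : Nat.card (Fin (2 ^ k)) ≤ Nat.card (G → Bool) :=
      Nat.card_le_card_of_injective _ hinj
    rw [Nat.card_eq_fintype_card, Fintype.card_fin, Nat.card_fun, Nat.card_eq_fintype_card,
      Fintype.card_bool, Nat.card_coe_set_eq] at hc
    exact (Nat.pow_le_pow_iff_right (by norm_num)).mp hc
end

section
/- Let k ≥ 1 and n = 2^k. With the variable set Vₙ = Fin (n−1) ⊕ Fin k, the models Mₙ = {σᵢ | i ∈ Fin n} where σᵢ (Sum.inl j) = decide (j.val + 1 = i.val) and σᵢ (Sum.inr b) = Nat.testBit i.val b.val, and the projection set Pₙ = Set.range Sum.inl: the set Yₙ = Set.range Sum.inr is a UBS of Pₙ in Mₙ with Set.ncard Yₙ = k, and every UBS U of Pₙ in Mₙ satisfies Set.ncard U ≥ k. Hence the smallest UBS of Pₙ in Mₙ has size ⌈log₂ n⌉ = k. -/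
lemma modelσ_inj_of_inl {k : ℕ} {i i' : Fin (2 ^ k)}
    (h : ∀ j : Fin (2 ^ k - 1), ((j.val + 1 = i.val) ↔ (j.val + 1 = i'.val))) : i = i' := by
  have hi : i.val < 2 ^ k := i.isLt
  have hi' : i'.val < 2 ^ k := i'.isLt
  apply Fin.ext
  by_contra hne
  rcases Nat.eq_zero_or_pos i.val with h0 | hp
  · rcases Nat.eq_zero_or_pos i'.val with h0' | hp'
    · omega
    · have := (h ⟨i'.val - 1, by omega⟩).mpr (by simp; omega)
      simp at this; omega
  · have := (h ⟨i.val - 1, by omega⟩).mp (by simp; omega)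
    simp at this; omega

theorem UBS_exponentially_smaller (k : ℕ) (hk : 1 ≤ k) :
    IsUBS (Set.range (modelσ k)) (Set.range Sum.inl) (Set.range Sum.inr) ∧
    Set.ncard (Set.range (Sum.inr : Fin k → Fin (2 ^ k - 1) ⊕ Fin k)) = k ∧
    ∀ U : Set (Fin (2 ^ k - 1) ⊕ Fin k),
      IsUBS (Set.range (modelσ k)) (Set.range Sum.inl) U → k ≤ Set.ncard U := by
  refine ⟨?_, ?_, ?_⟩
  · rintro _ ⟨i, rfl⟩ _ ⟨i', rfl⟩ h
    have hii : i = i' := by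
      apply Fin.ext
      apply Nat.eq_of_testBit_eq
      intro b
      by_cases hb : b < k
      · have := congrFun h ⟨Sum.inr ⟨b, hb⟩, ⟨⟨b, hb⟩, rfl⟩⟩
        simpa [restrict, modelσ] using this
      · have h1 : i.val < 2 ^ b := lt_of_lt_of_le i.isLt (Nat.pow_le_pow_right (by norm_num) (by omega))
        have h2 : i'.val < 2 ^ b := lt_of_lt_of_le i'.isLt (Nat.pow_le_pow_right (by norm_num) (by omega))
        rw [Nat.testBit_lt_two_pow h1, Nat.testBit_lt_two_pow h2]
    rw [hii]
  · rw [← Nat.card_coe_set_eq, Nat.card_range_of_injective Sum.inr_injective]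
    simp
  · intro U hU
    have hinj : Function.Injective (fun i : Fin (2 ^ k) => restrict U (modelσ k i)) := by
      intro i i' h
      have hP := hU _ ⟨i, rfl⟩ _ ⟨i', rfl⟩ h
      apply modelσ_inj_of_inl
      intro j
      have hj := congrFun hP ⟨Sum.inl j, ⟨j, rfl⟩⟩
      simp only [restrict, modelσ] at hj
      rw [decide_eq_decide] at hj
      exact hj
    have hle : Nat.card (Fin (2 ^ k)) ≤ Nat.card (U → Bool) :=
      Nat.card_le_card_of_injective _ hinj
    have hfun : Nat.card (U → Bool) = 2 ^ Nat.card U := by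
      rw [Nat.card_fun]
      simp
    rw [Nat.card_eq_fintype_card, Fintype.card_fin, hfun, Nat.card_coe_set_eq] at hle
    exact (Nat.pow_le_pow_iff_right (by norm_num)).mp hle
end

section
/- Let k ≥ 1 and n = 2^k. With the variable set Vₙ = Fin (n−1) ⊕ Fin k, the models Mₙ = {σᵢ | i ∈ Fin n} where σᵢ (Sum.inl j) = decide (j.val + 1 = i.val) and σᵢ (Sum.inr b) = Nat.testBit i.val b.val, and the projection set Pₙ = Set.range Sum.inl: every independent support of Pₙ in Mₙ equals Pₙ, i.e., every set S with S ⊆ Pₙ that is a UBS of Pₙ in Mₙ satisfies S = Pₙ. Hence the smallest IS of Pₙ in Mₙ is Pₙ itself, of size n − 1. -/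
theorem smallest_IS_is_projection_set (k : ℕ) (hk : 1 ≤ k) :
    (∀ S : Set (Fin (2 ^ k - 1) ⊕ Fin k),
        S ⊆ Set.range Sum.inl →
        IsUBS (Set.range (modelσ k)) (Set.range Sum.inl) S →
        S = Set.range Sum.inl) ∧
    Set.ncard (Set.range (Sum.inl : Fin (2 ^ k - 1) → Fin (2 ^ k - 1) ⊕ Fin k)) = 2 ^ k - 1 := by
  have hpow : 1 ≤ 2 ^ k := Nat.one_le_two_pow
  constructor
  · intro S hsub hubs
    apply Set.Subset.antisymm hsub
    rintro _ ⟨j, rfl⟩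
    by_contra hj
    have hj1 : j.val + 1 < 2 ^ k := by have := j.isLt; omega
    have h0 : (0 : ℕ) < 2 ^ k := by omega
    have key := hubs (modelσ k ⟨j.val + 1, hj1⟩) ⟨_, rfl⟩ (modelσ k ⟨0, h0⟩) ⟨_, rfl⟩ ?_
    · have := congrFun key ⟨Sum.inl j, Set.mem_range_self j⟩
      simp [restrict, modelσ] at this
    · funext ⟨x, hx⟩
      obtain ⟨j', rfl⟩ := hsub hx
      have hne : j' ≠ j := fun h => hj (h ▸ hx)
      simp [restrict, modelσ]
      omega
  · rw [← Set.image_univ, Set.ncard_image_of_injective _ Sum.inl_injective,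
      Set.ncard_univ, Nat.card_eq_fintype_card, Fintype.card_fin]
end

section
/- Let k ≥ 2 and n = 2^k. With the variable set Vₙ = Fin (n−1) ⊕ Fin k, the models Mₙ = {σᵢ | i ∈ Fin n} where σᵢ (Sum.inl j) = decide (j.val + 1 = i.val) and σᵢ (Sum.inr b) = Nat.testBit i.val b.val, and the projection set Qₙ = {Sum.inl j | j ∈ Fin (n−1), j.val + 1 is not a power of 2}: a set S ⊆ Vₙ is a GIS of Qₙ in Mₙ if and only if S = Qₙ. In other words, the only GIS of Qₙ in Mₙ is Qₙ itself. -/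
/-- The projection set `Qₙ`: the x-variables `x₁, …, x_{n-1}` excluding those whose
index is a power of 2. -/
def Qset (k : ℕ) : Set (Fin (2 ^ k - 1) ⊕ Fin k) :=
  {v | ∃ j : Fin (2 ^ k - 1), (¬ ∃ m : ℕ, j.val + 1 = 2 ^ m) ∧ v = Sum.inl j}

/-- On `Qset k`, the model indexed by a power of two agrees with the model indexed
by `0` (all variables of `Qset` are false in both). -/
lemma Q_restrict_pow (k m : ℕ) (h : 2 ^ m < 2 ^ k) :
    restrict (Qset k) (modelσ k ⟨2 ^ m, h⟩) =
    restrict (Qset k) (modelσ k ⟨0, Nat.two_pow_pos k⟩) := by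
  funext x
  obtain ⟨v, hv⟩ := x
  obtain ⟨j, hjp, rfl⟩ := hv
  simp only [restrict, modelσ]
  rw [decide_eq_false (fun hh => hjp ⟨m, hh⟩), decide_eq_false (Nat.succ_ne_zero _)]

theorem only_GIS_is_Q (k : ℕ) (hk : 2 ≤ k) (S : Set (Fin (2 ^ k - 1) ⊕ Fin k)) :
    IsGIS (Set.range (modelσ k)) (Qset k) S ↔ S = Qset k := by
  constructor
  · rintro ⟨hU, hL⟩
    have hSQ : S ⊆ Qset k := by
      intro v hvS
      by_contra hvQ
      rcases v with j | b
      · -- an x-variable whose index is a power of 2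
        have hex : ∃ m : ℕ, j.val + 1 = 2 ^ m := by
          by_contra hne
          exact hvQ ⟨j, hne, rfl⟩
        obtain ⟨m, hm⟩ := hex
        have h1 : j.val + 1 < 2 ^ k := by have := j.isLt; omega
        have hlt : 2 ^ m < 2 ^ k := hm ▸ h1
        have heq := hL _ ⟨⟨2 ^ m, hlt⟩, rfl⟩ _ ⟨⟨0, Nat.two_pow_pos k⟩, rfl⟩
          (Q_restrict_pow k m hlt)
        have := congrFun heq ⟨Sum.inl j, hvS⟩
        simp only [restrict, modelσ] at this
        rw [decide_eq_true hm, decide_eq_false (Nat.succ_ne_zero _)] at this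
        simp at this
      · -- a y-variable
        have hlt : 2 ^ b.val < 2 ^ k := Nat.pow_lt_pow_right one_lt_two b.isLt
        have heq := hL _ ⟨⟨2 ^ b.val, hlt⟩, rfl⟩ _ ⟨⟨0, Nat.two_pow_pos k⟩, rfl⟩
          (Q_restrict_pow k b.val hlt)
        have := congrFun heq ⟨Sum.inr b, hvS⟩
        simp only [restrict, modelσ, Nat.testBit_two_pow_self, Nat.zero_testBit] at this
        exact Bool.noConfusion this
    apply Set.Subset.antisymm hSQ
    -- Qset ⊆ S
    rintro v ⟨j, hjp, rfl⟩
    by_contra hvS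
    have hj1 : j.val + 1 < 2 ^ k := by
      have := j.isLt; omega
    have hSres : restrict S (modelσ k ⟨j.val + 1, hj1⟩) =
        restrict S (modelσ k ⟨0, Nat.two_pow_pos k⟩) := by
      funext x
      obtain ⟨w, hwS⟩ := x
      obtain ⟨j', hjp', rfl⟩ := hSQ hwS
      have hne : j'.val ≠ j.val := fun h => hvS ((Fin.ext h : j' = j) ▸ hwS)
      simp only [restrict, modelσ]
      rw [decide_eq_false (by omega), decide_eq_false (Nat.succ_ne_zero _)]
    have heq := hU _ ⟨⟨j.val + 1, hj1⟩, rfl⟩ _ ⟨⟨0, Nat.two_pow_pos k⟩, rfl⟩ hSres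
    have := congrFun heq ⟨Sum.inl j, ⟨j, hjp, rfl⟩⟩
    simp only [restrict, modelσ] at this
    simp at this
  · rintro rfl
    exact ⟨fun σ₁ _ σ₂ _ h => h, fun σ₁ _ σ₂ _ h => h⟩
end

section
/- Let V be a type of propositional variables, M ⊆ (V → Bool) a set of models, and P ⊆ V a projection set. Let J, Q, D ⊆ V be pairwise disjoint sets with J ∪ Q ∪ D = V, and let z ∈ Q. Suppose that for all σ₁, σ₂ ∈ M, if σ₁ and σ₂ agree on every variable in J ∪ (Q \ {z}) then σ₁ and σ₂ agree on every variable in P ∩ (D ∪ {z}). Then J ∪ (Q \ {z}) is a UBS of P in M. -/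
/-- Correctness of the unsatisfiability check in algorithm FindUBS (Theorem 3 of the
paper): if the check formula `ξ(J, Q∖{z}, D, z, D', z')` is unsatisfiable, i.e. any
two models agreeing on `J ∪ (Q ∖ {z})` also agree on `P ∩ (D ∪ {z})`, then
`J ∪ (Q ∖ {z})` is a UBS of `P` in `M`. -/
theorem findUBS_check_correct {V : Type*} (M : Set (V → Bool)) (P J Q D : Set V) (z : V)
    (hJQ : Disjoint J Q) (hJD : Disjoint J D) (hQD : Disjoint Q D)
    (hcover : J ∪ Q ∪ D = Set.univ) (hz : z ∈ Q)
    (hxi : ∀ σ₁ ∈ M, ∀ σ₂ ∈ M,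
      (∀ v ∈ J ∪ (Q \ {z}), σ₁ v = σ₂ v) → (∀ v ∈ P ∩ (D ∪ {z}), σ₁ v = σ₂ v)) :
    IsUBS M P (J ∪ (Q \ {z})) := by
  intro σ₁ h1 σ₂ h2 hagree
  have hS : ∀ v ∈ J ∪ (Q \ {z}), σ₁ v = σ₂ v := by
    intro v hv
    exact congrFun hagree ⟨v, hv⟩
  have hkey := hxi σ₁ h1 σ₂ h2 hS
  funext x
  obtain ⟨v, hvP⟩ := x
  show σ₁ v = σ₂ v
  have hv : v ∈ J ∪ Q ∪ D := hcover ▸ Set.mem_univ v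
  rcases hv with (hJ | hQ) | hD
  · exact hS v (Or.inl hJ)
  · by_cases hvz : v = z
    · exact hkey v ⟨hvP, Or.inr hvz⟩
    · exact hS v (Or.inr ⟨hQ, hvz⟩)
  · exact hkey v ⟨hvP, Or.inl hD⟩
end

section
/- Let V be a type of propositional variables, M ⊆ (V → Bool) a finite set of models, P ⊆ V a projection set, and U a UBS of P in M. Let (Ω, μ) be a probability space, c : Ω → ℝ a random variable, ε > 0, and δ ∈ (0, 1). Write cU = Set.ncard {σ↾U | σ ∈ M} and cP = Set.ncard {σ↾P | σ ∈ M}. If μ {ω | (cU : ℝ) / (1 + ε) ≤ c ω ∧ c ω ≤ (1 + ε) * cU} ≥ 1 − δ, then μ {ω | (cP : ℝ) ≤ (1 + ε) * c ω} ≥ 1 − δ. That is, a PAC (ε, δ) estimate of the projected count on a UBS U yields, with probability at least 1 − δ, an upper bound (up to factor 1 + ε) on the projected count on P. -/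
open MeasureTheory

lemma ncard_P_le_U {V : Type*} (M : Set (V → Bool)) (hM : M.Finite)
    (P U : Set V) (hU : IsUBS M P U) :
    Set.ncard {τ | ∃ σ ∈ M, τ = restrict P σ} ≤
      Set.ncard {τ | ∃ σ ∈ M, τ = restrict U σ} := by
  classical
  set SU : Set (U → Bool) := {τ | ∃ σ ∈ M, τ = restrict U σ}
  set SP : Set (P → Bool) := {τ | ∃ σ ∈ M, τ = restrict P σ}
  have hSU : SU = restrict U '' M := by
    ext τ; simp [SU, Set.mem_image, eq_comm]
  have hSUfin : SU.Finite := hSU ▸ hM.image _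
  set g : (U → Bool) → (P → Bool) := fun τ =>
    if h : ∃ σ ∈ M, restrict U σ = τ then restrict P h.choose else fun _ => false
  have hsub : SP ⊆ g '' SU := by
    rintro τ ⟨σ, hσ, rfl⟩
    refine ⟨restrict U σ, ⟨σ, hσ, rfl⟩, ?_⟩
    have h : ∃ σ' ∈ M, restrict U σ' = restrict U σ := ⟨σ, hσ, rfl⟩
    simp only [g, dif_pos h]
    exact hU _ h.choose_spec.1 _ hσ h.choose_spec.2
  calc SP.ncard ≤ (g '' SU).ncard := Set.ncard_le_ncard hsub (hSUfin.image _)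
    _ ≤ SU.ncard := Set.ncard_image_le hSUfin

/-- Correctness of algorithm UBCount (Theorem 5 of the paper): a PAC `(ε, δ)`
estimate `c` of the projected count on a UBS `U` is, with probability at least
`1 - δ`, an upper bound (up to a factor `1 + ε`) on the projected count on `P`. -/
theorem UBCount_correct {V : Type*} (M : Set (V → Bool)) (hM : M.Finite)
    (P U : Set V) (hU : IsUBS M P U)
    {Ω : Type*} [MeasurableSpace Ω] (μ : Measure Ω) [IsProbabilityMeasure μ]
    (c : Ω → ℝ) (ε δ : ℝ) (hε : 0 < ε) (hδ : 0 < δ) (hδ1 : δ < 1)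
    (hPAC : μ {ω | (Set.ncard {τ | ∃ σ ∈ M, τ = restrict U σ} : ℝ) / (1 + ε) ≤ c ω ∧
          c ω ≤ (1 + ε) * (Set.ncard {τ | ∃ σ ∈ M, τ = restrict U σ} : ℝ)}
        ≥ ENNReal.ofReal (1 - δ)) :
    μ {ω | (Set.ncard {τ | ∃ σ ∈ M, τ = restrict P σ} : ℝ) ≤ (1 + ε) * c ω}
      ≥ ENNReal.ofReal (1 - δ) := by
  refine le_trans hPAC (μ.mono ?_)
  intro ω hω
  have hle := ncard_P_le_U M hM P U hU
  have h1ε : (0:ℝ) < 1 + ε := by linarith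
  have h1 : (Set.ncard {τ | ∃ σ ∈ M, τ = restrict U σ} : ℝ) ≤ (1 + ε) * c ω := by
    have := hω.1
    rw [div_le_iff₀ h1ε] at this
    calc (Set.ncard {τ | ∃ σ ∈ M, τ = restrict U σ} : ℝ) ≤ c ω * (1 + ε) := this
      _ = (1 + ε) * c ω := mul_comm _ _
  exact le_trans (by exact_mod_cast hle) h1
end
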